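/- arXiv:1806.00785 — 5 statements merged into one kernel-verified Lean document; each statement's English description precedes it below -/
import Mathlib

section
/- If a topological space X is F-Y countably π-domain representable, then player α has a winning strategy in the Banach–Mazur game on X (i.e., X is weakly α-favorable). -/
open Set TopologicalSpace

universe u v

/-! ### The Banach–Mazur game -/

/-- Response of α's strategy `s` to β's moves `U 0, …, U n` in the Banach–Mazur game. -/
def bmResp {X : Type v} (s : ∀ n : ℕ, (Fin (n + 1) → Set X) → Set X)
    (U : ℕ → Set X) (n : ℕ) : Set X :=
  s n (fun i => U i)

/-- β's moves `U 0, …, U n` form a legal partial play against the strategy `s`: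
each `U k` is a nonempty open set and `U (k+1)` is contained in α's previous response. -/
def bmLegal {X : Type v} [TopologicalSpace X]
    (s : ∀ n : ℕ, (Fin (n + 1) → Set X) → Set X) (U : ℕ → Set X) (n : ℕ) : Prop :=
  (∀ k ≤ n, IsOpen (U k) ∧ (U k).Nonempty) ∧
  (∀ k, k + 1 ≤ n → U (k + 1) ⊆ bmResp s U k)

/-- `s` is a winning strategy for α in the Banach–Mazur game: to any legal partial play
it responds with a nonempty open subset of β's last move, and the intersection of its
responses along any infinite legal play is nonempty. -/
def IsBMWinning {X : Type v} [TopologicalSpace X]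
    (s : ∀ n : ℕ, (Fin (n + 1) → Set X) → Set X) : Prop :=
  (∀ U n, bmLegal s U n →
      IsOpen (bmResp s U n) ∧ (bmResp s U n).Nonempty ∧ bmResp s U n ⊆ U n) ∧
  (∀ U : ℕ → Set X, (∀ n, bmLegal s U n) → (⋂ n, bmResp s U n).Nonempty)

/-- A space is weakly α-favorable if α has a winning strategy in the Banach–Mazur game. -/
def WeaklyAlphaFavorable (X : Type v) [TopologicalSpace X] : Prop :=
  ∃ s : ∀ n : ℕ, (Fin (n + 1) → Set X) → Set X, IsBMWinning s

/-! ### The strong Choquet game -/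

/-- Response of α's strategy `s` to β's moves `(x 0, U 0), …, (x n, U n)`. -/
def scResp {X : Type v} (s : ∀ n : ℕ, (Fin (n + 1) → X × Set X) → Set X)
    (p : ℕ → X × Set X) (n : ℕ) : Set X :=
  s n (fun i => p i)

/-- β's moves `(x k, U k)` for `k ≤ n` form a legal partial play of the strong Choquet game
against `s`: each `U k` is open with `x k ∈ U k`, and `U (k+1)` is contained in α's previous
response. -/
def scLegal {X : Type v} [TopologicalSpace X]
    (s : ∀ n : ℕ, (Fin (n + 1) → X × Set X) → Set X) (p : ℕ → X × Set X) (n : ℕ) : Prop :=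
  (∀ k ≤ n, IsOpen (p k).2 ∧ (p k).1 ∈ (p k).2) ∧
  (∀ k, k + 1 ≤ n → (p (k + 1)).2 ⊆ scResp s p k)

/-- `s` is a winning strategy for α in the strong Choquet game. -/
def IsSCWinning {X : Type v} [TopologicalSpace X]
    (s : ∀ n : ℕ, (Fin (n + 1) → X × Set X) → Set X) : Prop :=
  (∀ p n, scLegal s p n →
      IsOpen (scResp s p n) ∧ (p n).1 ∈ scResp s p n ∧ scResp s p n ⊆ (p n).2) ∧
  (∀ p : ℕ → X × Set X, (∀ n, scLegal s p n) → (⋂ n, scResp s p n).Nonempty)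

/-- A space is Choquet complete if α has a winning strategy in the strong Choquet game. -/
def ChoquetComplete (X : Type v) [TopologicalSpace X] : Prop :=
  ∃ s : ∀ n : ℕ, (Fin (n + 1) → X × Set X) → Set X, IsSCWinning s

/-! ### Fleissner–Yengulalp domain representability -/

/-- X is F-Y countably π-domain representable: there is a triple `(Q, ≪, B)` where
`B` maps `Q` to nonempty open sets forming a π-base, `≪` is transitive, `p ≪ q`
implies `B p ⊇ B q`, any two elements whose `B`-values meet have a common upper bound,
and every countable upward directed `D ⊆ Q` has `⋂ {B q : q ∈ D} ≠ ∅`. -/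
def FYCountablyPiDomainRep (X : Type v) [TopologicalSpace X] : Prop :=
  ∃ (Q : Type u) (r : Q → Q → Prop) (B : Q → Set X),
    (∀ q, IsOpen (B q) ∧ (B q).Nonempty) ∧
    (∀ U : Set X, IsOpen U → U.Nonempty → ∃ q, B q ⊆ U) ∧
    Transitive r ∧
    (∀ p q, r p q → B q ⊆ B p) ∧
    (∀ p q, (B p ∩ B q).Nonempty → ∃ t, r p t ∧ r q t) ∧
    (∀ D : Set Q, D.Nonempty → D.Countable → DirectedOn r D → (⋂ q ∈ D, B q).Nonempty)

/-- X is F-Y π-domain representable (the intersection condition holds for all upward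
directed subsets, of arbitrary cardinality). -/
def FYPiDomainRep (X : Type v) [TopologicalSpace X] : Prop :=
  ∃ (Q : Type u) (r : Q → Q → Prop) (B : Q → Set X),
    (∀ q, IsOpen (B q) ∧ (B q).Nonempty) ∧
    (∀ U : Set X, IsOpen U → U.Nonempty → ∃ q, B q ⊆ U) ∧
    Transitive r ∧
    (∀ p q, r p q → B q ⊆ B p) ∧
    (∀ p q, (B p ∩ B q).Nonempty → ∃ t, r p t ∧ r q t) ∧
    (∀ D : Set Q, D.Nonempty → DirectedOn r D → (⋂ q ∈ D, B q).Nonempty)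

/-- X is F-Y countably domain representable: there is a triple `(Q, ≪, B)` where
`B` maps `Q` to nonempty open sets forming a base, `≪` is transitive, `p ≪ q`
implies `B p ⊇ B q`, for every point `x` the set `{q : x ∈ B q}` is upward directed,
and every countable upward directed `D ⊆ Q` has `⋂ {B q : q ∈ D} ≠ ∅`. -/
def FYCountablyDomainRep (X : Type v) [TopologicalSpace X] : Prop :=
  ∃ (Q : Type u) (r : Q → Q → Prop) (B : Q → Set X),
    (∀ q, IsOpen (B q) ∧ (B q).Nonempty) ∧
    (∀ U : Set X, IsOpen U → ∀ x ∈ U, ∃ q, x ∈ B q ∧ B q ⊆ U) ∧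
    Transitive r ∧
    (∀ p q, r p q → B q ⊆ B p) ∧
    (∀ x : X, DirectedOn r {q | x ∈ B q}) ∧
    (∀ D : Set Q, D.Nonempty → D.Countable → DirectedOn r D → (⋂ q ∈ D, B q).Nonempty)

/-- X is F-Y domain representable (the intersection condition holds for all upward
directed subsets, of arbitrary cardinality). -/
def FYDomainRep (X : Type v) [TopologicalSpace X] : Prop :=
  ∃ (Q : Type u) (r : Q → Q → Prop) (B : Q → Set X),
    (∀ q, IsOpen (B q) ∧ (B q).Nonempty) ∧
    (∀ U : Set X, IsOpen U → ∀ x ∈ U, ∃ q, x ∈ B q ∧ B q ⊆ U) ∧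
    Transitive r ∧
    (∀ p q, r p q → B q ⊆ B p) ∧
    (∀ x : X, DirectedOn r {q | x ∈ B q}) ∧
    (∀ D : Set Q, D.Nonempty → DirectedOn r D → (⋂ q ∈ D, B q).Nonempty)

/-! ### The space σ({0,1}^{ω₁}) with the ω₁-box topology -/

/-- The σ-product of the Cantor cube over `I`: points with countable support. -/
def Sigma01 (I : Type v) : Type v := {x : I → Bool // {a | x a = true}.Countable}

/-- The basic set `pr_A⁻¹(f↾A)`: points of the σ-product agreeing with `f` on `A`. -/
def basicSet (I : Type v) (A : Set I) (f : I → Bool) : Set (Sigma01 I) :=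
  {y | ∀ a ∈ A, y.1 a = f a}

/-- The ω₁-box topology on the σ-product, generated by the sets `pr_A⁻¹(f↾A)`
for countable `A`. -/
instance Sigma01.topologicalSpace (I : Type v) : TopologicalSpace (Sigma01 I) :=
  TopologicalSpace.generateFrom
    {U | ∃ (A : Set I) (f : I → Bool), A.Countable ∧ U = basicSet I A f}

/-!
α keeps an element `q n` of the π-base index set with `B (q n) ⊆ U n` and plays `B (q n)`.
When β answers with `U (n+1) ⊆ B (q n)`, the π-base gives `p` with `B p ⊆ U (n+1)`; as `B p`
meets `B (q n)`, (πD4) yields a common upper bound `q (n+1)`, so `B (q (n+1)) ⊆ B p ⊆ U (n+1)`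
and `q n ≪ q (n+1)`. The states form a `≪`-chain, a countable directed set, so (πD5) makes the
intersection of α's moves nonempty.
-/

theorem directedOn_range_of_rel_succ {Q : Type*} {r : Q → Q → Prop} [IsTrans Q r]
    {q : ℕ → Q} (hq : ∀ n, r (q n) (q (n + 1))) : DirectedOn r (range q) := by
  rintro _ ⟨m, rfl⟩ _ ⟨n, rfl⟩
  exact ⟨q (max m n + 1), mem_range_self _,
    Nat.rel_of_forall_rel_succ_of_lt r hq (by omega),
    Nat.rel_of_forall_rel_succ_of_lt r hq (by omega)⟩

theorem weaklyAlphaFavorable_of_isEmpty {X : Type*} [TopologicalSpace X] [IsEmpty X] :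
    WeaklyAlphaFavorable X := by
  refine ⟨fun _ _ => ∅, fun U n hl => ?_, fun U hl => ?_⟩
  · obtain ⟨x, -⟩ := (hl.1 0 n.zero_le).2
    exact isEmptyElim x
  · obtain ⟨x, -⟩ := ((hl 0).1 0 le_rfl).2
    exact isEmptyElim x

section RefineStrategy

variable {X : Type*} [TopologicalSpace X] {Q : Type*} [Nonempty Q]
  (r : Q → Q → Prop) (B : Q → Set X)

/-- On plays that are not legal the predicate may be unsatisfiable and `epsilon` returns junk;
the lemmas below only look at legal plays. -/
noncomputable def refineState : ∀ n : ℕ, (Fin (n + 1) → Set X) → Q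
  | 0, U => Classical.epsilon fun q => B q ⊆ U 0
  | n + 1, U => Classical.epsilon fun t =>
      r (refineState n fun i => U i.castSucc) t ∧ B t ⊆ U (Fin.last _)

noncomputable def refineStrategy (n : ℕ) (U : Fin (n + 1) → Set X) : Set X :=
  B (refineState r B n U)

variable {r B}

theorem refineState_subset (hbase : ∀ U : Set X, IsOpen U → U.Nonempty → ∃ q, B q ⊆ U)
    (hnext : ∀ q U, IsOpen U → U.Nonempty → U ⊆ B q → ∃ t, r q t ∧ B t ⊆ U)
    {U : ℕ → Set X} {n : ℕ} (hl : bmLegal (refineStrategy r B) U n) :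
    B (refineState r B n fun i => U i) ⊆ U n := by
  obtain ⟨hUo, hUne⟩ := hl.1 n le_rfl
  cases n with
  | zero => exact Classical.epsilon_spec (hbase _ hUo hUne)
  | succ n => exact (Classical.epsilon_spec (hnext _ _ hUo hUne (hl.2 n le_rfl))).2

theorem rel_refineState_succ
    (hnext : ∀ q U, IsOpen U → U.Nonempty → U ⊆ B q → ∃ t, r q t ∧ B t ⊆ U)
    {U : ℕ → Set X} {n : ℕ} (hl : bmLegal (refineStrategy r B) U (n + 1)) :
    r (refineState r B n fun i => U i) (refineState r B (n + 1) fun i => U i) := by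
  obtain ⟨hUo, hUne⟩ := hl.1 (n + 1) le_rfl
  exact (Classical.epsilon_spec (hnext _ _ hUo hUne (hl.2 n le_rfl))).1

theorem isBMWinning_refineStrategy (hB : ∀ q, IsOpen (B q) ∧ (B q).Nonempty)
    (hbase : ∀ U : Set X, IsOpen U → U.Nonempty → ∃ q, B q ⊆ U)
    (hnext : ∀ q U, IsOpen U → U.Nonempty → U ⊆ B q → ∃ t, r q t ∧ B t ⊆ U)
    (hchain : ∀ q : ℕ → Q, (∀ n, r (q n) (q (n + 1))) → (⋂ n, B (q n)).Nonempty) :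
    IsBMWinning (refineStrategy r B) :=
  ⟨fun _ _ hl => ⟨(hB _).1, (hB _).2, refineState_subset hbase hnext hl⟩,
    fun _ hl => hchain _ fun n => rel_refineState_succ hnext (hl (n + 1))⟩

end RefineStrategy

section PiDomainRep

variable {X : Type*} {Q : Type*} {r : Q → Q → Prop} {B : Q → Set X}

theorem exists_rel_subset_of_piBase [TopologicalSpace X] (hne : ∀ q, (B q).Nonempty)
    (hbase : ∀ U : Set X, IsOpen U → U.Nonempty → ∃ q, B q ⊆ U)
    (hsub : ∀ p q, r p q → B q ⊆ B p)
    (hmeet : ∀ p q, (B p ∩ B q).Nonempty → ∃ t, r p t ∧ r q t)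
    {q : Q} {U : Set X} (hU : IsOpen U) (hUne : U.Nonempty) (hUq : U ⊆ B q) :
    ∃ t, r q t ∧ B t ⊆ U := by
  obtain ⟨p, hp⟩ := hbase U hU hUne
  obtain ⟨x, hx⟩ := hne p
  obtain ⟨t, hqt, hpt⟩ := hmeet q p ⟨x, hUq (hp hx), hx⟩
  exact ⟨t, hqt, (hsub p t hpt).trans hp⟩

theorem iInter_nonempty_of_rel_succ [IsTrans Q r]
    (hdir : ∀ D : Set Q, D.Nonempty → D.Countable → DirectedOn r D → (⋂ q ∈ D, B q).Nonempty)
    {q : ℕ → Q} (hq : ∀ n, r (q n) (q (n + 1))) : (⋂ n, B (q n)).Nonempty := by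
  rw [← biInter_range]
  exact hdir _ (range_nonempty q) (countable_range q) (directedOn_range_of_rel_succ hq)

end PiDomainRep

/-- F-Y countably π-domain representable implies weakly α-favorable. -/
theorem stmt0 {X : Type v} [TopologicalSpace X]
    (h : FYCountablyPiDomainRep.{u} X) : WeaklyAlphaFavorable X := by
  obtain ⟨Q, r, B, hB, hbase, htrans, hsub, hmeet, hdir⟩ := h
  rcases isEmpty_or_nonempty X with hX | ⟨⟨x⟩⟩
  · exact weaklyAlphaFavorable_of_isEmpty
  have : Nonempty Q := ⟨(hbase univ isOpen_univ ⟨x, trivial⟩).choose⟩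
  have : IsTrans Q r := ⟨@htrans⟩
  exact ⟨refineStrategy r B, isBMWinning_refineStrategy hB hbase
    (fun _ _ hU hUne hUq => exists_rel_subset_of_piBase (fun q => (hB q).2) hbase hsub hmeet
      hU hUne hUq)
    fun _ => iInter_nonempty_of_rel_succ hdir⟩
end

section
/- The product of any family of weakly α-favorable topological spaces is weakly α-favorable. -/
open Set TopologicalSpace

universe u v

/-! Given winning strategies `σ i` for α in the factors, α plays in the product as follows.
Inside each move `U n` of β she chooses a basic open box, which is proper in only finitely
many coordinates. A coordinate becomes active at the first stage whose box is proper in it;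
from then on α runs `σ i` on the `i`-th sides of the boxes, and she answers with the product
of these responses over the coordinates activated so far, which is a basic open set. Along an
infinite play every coordinate sees a legal play against `σ i`, so a point can be chosen in
each coordinate, and these points form a point of the intersection. -/

section StrategyOfSeq

variable {Y : Type*}

def strategyOfSeq (R : (ℕ → Set Y) → ℕ → Set Y) :
    ∀ n : ℕ, (Fin (n + 1) → Set Y) → Set Y :=
  fun n h => R (fun k => h (Fin.ofNat (n + 1) k)) n

theorem bmResp_strategyOfSeq {R : (ℕ → Set Y) → ℕ → Set Y}
    (hR : ∀ U V n, (∀ k ≤ n, U k = V k) → R U n = R V n) (U : ℕ → Set Y) (n : ℕ) :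
    bmResp (strategyOfSeq R) U n = R U n :=
  hR _ _ n fun k hk => by simp [Fin.ofNat, Nat.mod_eq_of_lt (Nat.lt_succ_of_le hk)]

end StrategyOfSeq

theorem Set.subset_of_univ_pi_subset_pi {ι : Type*} {X : ι → Type*} {C R : ∀ i, Set (X i)}
    {S : Set ι} (hC : ∀ i, (C i).Nonempty) (h : univ.pi C ⊆ S.pi R) {i : ι} (hi : i ∈ S) :
    C i ⊆ R i := by
  rw [← eval_image_univ_pi (univ_pi_nonempty_iff.mpr hC)]
  rintro _ ⟨f, hf, rfl⟩
  exact h hf i hi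

namespace BanachMazurProduct

variable {ι : Type*} {X : ι → Type*} [∀ i, TopologicalSpace (X i)]

/-- The sides off `b.1` must be nonempty and open too: they are fed to the strategies of
coordinates activated earlier. -/
def IsBoxIn (O : Set (∀ i, X i)) (b : Finset ι × ∀ i, Set (X i)) : Prop :=
  (∀ i, IsOpen (b.2 i) ∧ (b.2 i).Nonempty) ∧ (b.1 : Set ι).pi b.2 ⊆ O

theorem exists_isBoxIn {O : Set (∀ i, X i)} (hO : IsOpen O) (hne : O.Nonempty) :
    ∃ b, IsBoxIn O b := by
  classical
  obtain ⟨f, hf⟩ := hne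
  obtain ⟨I, u, hu, hIu⟩ := isOpen_pi_iff.mp hO f hf
  refine ⟨(I, fun i => if i ∈ I then u i else univ), fun i => ?_,
    fun g hg => hIu fun i hi => ?_⟩
  · by_cases hi : i ∈ I
    · simpa [hi] using And.imp_right (fun hfi => ⟨f i, hfi⟩) (hu i hi)
    · simpa [hi] using ⟨f i, trivial⟩
  · have hi' : i ∈ I := hi
    simpa [hi'] using hg i hi

noncomputable def box (O : Set (∀ i, X i)) : Finset ι × ∀ i, Set (X i) :=
  Classical.epsilon (IsBoxIn O)

theorem box_isBoxIn {O : Set (∀ i, X i)} (hO : IsOpen O) (hne : O.Nonempty) :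
    IsBoxIn O (box O) :=
  Classical.epsilon_spec (exists_isBoxIn hO hne)

theorem IsBoxIn.subset_of_subset_pi {O : Set (∀ i, X i)} {b : Finset ι × ∀ i, Set (X i)}
    (hb : IsBoxIn O b) {S : Set ι} {R : ∀ i, Set (X i)} (hO : O ⊆ S.pi R) {i : ι}
    (hi : i ∈ S) : b.2 i ⊆ R i :=
  subset_of_univ_pi_subset_pi (fun j => (hb.1 j).2)
    ((pi_mono' (fun _ _ => subset_rfl) (subset_univ _)).trans (hb.2.trans hO)) hi

def activeCoords (U : ℕ → Set (∀ i, X i)) (n : ℕ) : Set ι :=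
  ⋃ k ≤ n, ((box (U k)).1 : Set ι)

noncomputable def activationTime (U : ℕ → Set (∀ i, X i)) (i : ι) : ℕ :=
  sInf {k | i ∈ (box (U k)).1}

def coordPlay (U : ℕ → Set (∀ i, X i)) (i : ι) (t : ℕ) : Set (X i) :=
  (box (U (activationTime U i + t))).2 i

theorem finite_activeCoords (U : ℕ → Set (∀ i, X i)) (n : ℕ) : (activeCoords U n).Finite :=
  (finite_le_nat n).biUnion fun _ _ => Finset.finite_toSet _

theorem mem_activeCoords_of_mem_box {U : ℕ → Set (∀ i, X i)} {i : ι} {n : ℕ}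
    (hi : i ∈ (box (U n)).1) : i ∈ activeCoords U n :=
  mem_iUnion₂.mpr ⟨n, le_rfl, hi⟩

theorem activationTime_le {U : ℕ → Set (∀ i, X i)} {i : ι} {n : ℕ}
    (hi : i ∈ activeCoords U n) : activationTime U i ≤ n := by
  obtain ⟨k, hk, hik⟩ := mem_iUnion₂.mp hi
  exact (Nat.sInf_le hik).trans hk

theorem mem_box_activationTime {U : ℕ → Set (∀ i, X i)} {i : ι} {n : ℕ}
    (hi : i ∈ activeCoords U n) : i ∈ (box (U (activationTime U i))).1 := by
  obtain ⟨k, -, hik⟩ := mem_iUnion₂.mp hi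
  exact Nat.sInf_mem (s := {k | i ∈ (box (U k)).1}) ⟨k, hik⟩

theorem mem_activeCoords_of_activationTime_le {U : ℕ → Set (∀ i, X i)} {i : ι} {n m : ℕ}
    (hi : i ∈ activeCoords U n) (hm : activationTime U i ≤ m) : i ∈ activeCoords U m :=
  mem_iUnion₂.mpr ⟨_, hm, mem_box_activationTime hi⟩

theorem activationTime_congr {U V : ℕ → Set (∀ i, X i)} {n : ℕ} (h : ∀ k ≤ n, U k = V k)
    {i : ι} (hi : i ∈ activeCoords U n) : activationTime U i = activationTime V i := by
  have hle := activationTime_le hi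
  have hV : i ∈ activeCoords V n :=
    mem_iUnion₂.mpr ⟨_, hle, h _ hle ▸ mem_box_activationTime hi⟩
  have hle' := activationTime_le hV
  refine le_antisymm (Nat.sInf_le ?_) (Nat.sInf_le ?_)
  · show i ∈ (box (U _)).1
    rw [h _ hle']
    exact mem_box_activationTime hV
  · show i ∈ (box (V _)).1
    rw [← h _ hle]
    exact mem_box_activationTime hi

variable (σ : ∀ i, ∀ n : ℕ, (Fin (n + 1) → Set (X i)) → Set (X i))

def prodResp (U : ℕ → Set (∀ i, X i)) (n : ℕ) : Set (∀ i, X i) :=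
  (activeCoords U n).pi fun i => bmResp (σ i) (coordPlay U i) (n - activationTime U i)

theorem prodResp_congr {U V : ℕ → Set (∀ i, X i)} {n : ℕ} (h : ∀ k ≤ n, U k = V k) :
    prodResp σ U n = prodResp σ V n := by
  have hA : activeCoords U n = activeCoords V n :=
    iUnion₂_congr fun k hk => by rw [h k hk]
  refine pi_congr hA fun i hi => ?_
  have hle := activationTime_le hi
  have ht := activationTime_congr h hi
  rw [← ht]
  refine congrArg (σ i _) (funext fun j => ?_)
  simp only [coordPlay, ← ht]
  rw [h _ (by omega)]

noncomputable def prodStrategy :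
    ∀ n : ℕ, (Fin (n + 1) → Set (∀ i, X i)) → Set (∀ i, X i) :=
  strategyOfSeq (prodResp σ)

theorem bmResp_prodStrategy (U : ℕ → Set (∀ i, X i)) (n : ℕ) :
    bmResp (prodStrategy σ) U n = prodResp σ U n :=
  bmResp_strategyOfSeq (fun _ _ _ => prodResp_congr σ) U n

variable {σ}

theorem bmLegal_coordPlay {U : ℕ → Set (∀ i, X i)} {n : ℕ}
    (hU : bmLegal (prodStrategy σ) U n) {i : ι} (hi : i ∈ activeCoords U n) :
    bmLegal (σ i) (coordPlay U i) (n - activationTime U i) := by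
  have hle := activationTime_le hi
  have hbox : ∀ t ≤ n - activationTime U i, IsBoxIn (U (activationTime U i + t))
      (box (U (activationTime U i + t))) := fun t ht =>
    box_isBoxIn (hU.1 _ (by omega)).1 (hU.1 _ (by omega)).2
  refine ⟨fun t ht => (hbox t ht).1 i, fun t ht => ?_⟩
  have hnext := hU.2 (activationTime U i + t) (by omega)
  rw [bmResp_prodStrategy] at hnext
  have hsub := (hbox (t + 1) ht).subset_of_subset_pi hnext
    (mem_activeCoords_of_activationTime_le hi (Nat.le_add_right _ t))
  rwa [Nat.add_sub_cancel_left] at hsub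

theorem prodResp_spec (hσ : ∀ i, IsBMWinning (σ i)) {U : ℕ → Set (∀ i, X i)} {n : ℕ}
    (hU : bmLegal (prodStrategy σ) U n) :
    IsOpen (prodResp σ U n) ∧ (prodResp σ U n).Nonempty ∧ prodResp σ U n ⊆ U n := by
  obtain ⟨hUo, f, hf⟩ := hU.1 n le_rfl
  have hcoord : ∀ i ∈ activeCoords U n,
      IsOpen (bmResp (σ i) (coordPlay U i) (n - activationTime U i)) ∧
      (bmResp (σ i) (coordPlay U i) (n - activationTime U i)).Nonempty ∧
      bmResp (σ i) (coordPlay U i) (n - activationTime U i) ⊆ (box (U n)).2 i := by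
    intro i hi
    have h := (hσ i).1 _ _ (bmLegal_coordPlay hU hi)
    rwa [coordPlay, Nat.add_sub_cancel' (activationTime_le hi)] at h
  refine ⟨isOpen_set_pi (finite_activeCoords U n) fun i hi => (hcoord i hi).1, ?_, ?_⟩
  · classical
    refine pi_nonempty_iff.mpr fun i => ?_
    by_cases hi : i ∈ activeCoords U n
    · obtain ⟨x, hx⟩ := (hcoord i hi).2.1
      exact ⟨x, fun _ => hx⟩
    · exact ⟨f i, fun h => absurd h hi⟩
  · intro g hg
    refine (box_isBoxIn hUo ⟨f, hf⟩).2 fun i hi => ?_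
    have hi' := mem_activeCoords_of_mem_box hi
    exact (hcoord i hi').2.2 (hg i hi')

theorem iInter_prodResp_nonempty (hσ : ∀ i, IsBMWinning (σ i))
    {U : ℕ → Set (∀ i, X i)} (hU : ∀ n, bmLegal (prodStrategy σ) U n) :
    (⋂ n, prodResp σ U n).Nonempty := by
  obtain ⟨f, -⟩ := ((hU 0).1 0 le_rfl).2
  have hpoint : ∀ i, ∃ y : X i, ∀ n, i ∈ activeCoords U n →
      y ∈ bmResp (σ i) (coordPlay U i) (n - activationTime U i) := by
    intro i
    by_cases hact : ∃ m, i ∈ activeCoords U m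
    · obtain ⟨m, hm⟩ := hact
      have hlegal : ∀ t, bmLegal (σ i) (coordPlay U i) t := fun t => by
        simpa using bmLegal_coordPlay (hU (activationTime U i + t))
          (mem_activeCoords_of_activationTime_le hm (Nat.le_add_right _ t))
      obtain ⟨y, hy⟩ := (hσ i).2 _ hlegal
      exact ⟨y, fun n _ => mem_iInter.mp hy _⟩
    · exact ⟨f i, fun n hn => absurd ⟨n, hn⟩ hact⟩
  choose y hy using hpoint
  exact ⟨y, mem_iInter.mpr fun n i hi => hy i n hi⟩

theorem isBMWinning_prodStrategy (hσ : ∀ i, IsBMWinning (σ i)) :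
    IsBMWinning (prodStrategy σ) := by
  simp only [IsBMWinning, bmResp_prodStrategy]
  exact ⟨fun _ _ hU => prodResp_spec hσ hU, fun _ hU => iInter_prodResp_nonempty hσ hU⟩

end BanachMazurProduct

/-- products of weakly α-favorable spaces are weakly α-favorable. -/
theorem stmt7 {ι : Type*} (X : ι → Type*) [∀ i, TopologicalSpace (X i)]
    (h : ∀ i, WeaklyAlphaFavorable (X i)) :
    WeaklyAlphaFavorable (∀ i, X i) := by
  choose σ hσ using h
  exact ⟨_, BanachMazurProduct.isBMWinning_prodStrategy hσ⟩
end

section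
/- The space σ({0,1}^{ω₁}) of all points of the Cantor cube {0,1}^{ω₁} with countable support, equipped with the ω₁-box topology generated by the sets pr_A^{-1}(x) for countable A ⊆ ω₁ and x ∈ {0,1}^A, is F-Y countably domain representable. -/
open Set TopologicalSpace

universe u v

/-!
Take for `Q` the countable partial functions `I ⇀ Bool`, ordered by extension, with `B p` the
set of points extending `p`. The members of a directed family are pairwise compatible, so a
countable directed family glues to a single countable partial function, and extending it by
`false` gives a point with countable support lying in every `B p`. Since `|I| ≤ 𝔠`, this `Q`
is `u`-small, so it can be moved into the universe `u` along `Shrink`.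
-/

universe w

open Cardinal

section Transfer

variable {X : Type v} [TopologicalSpace X]

theorem fyCountablyDomainRep_of_small {Q : Type w} [Small.{u} Q] (r : Q → Q → Prop)
    (B : Q → Set X) (hB : ∀ q, IsOpen (B q) ∧ (B q).Nonempty)
    (hbase : ∀ U : Set X, IsOpen U → ∀ x ∈ U, ∃ q, x ∈ B q ∧ B q ⊆ U)
    (htrans : Transitive r) (hanti : ∀ p q, r p q → B q ⊆ B p)
    (hdir : ∀ x : X, DirectedOn r {q | x ∈ B q})
    (hinter : ∀ D : Set Q, D.Nonempty → D.Countable → DirectedOn r D → (⋂ q ∈ D, B q).Nonempty) :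
    FYCountablyDomainRep.{u} X := by
  let e := equivShrink.{u} Q
  refine ⟨Shrink.{u} Q, fun p q => r (e.symm p) (e.symm q), fun q => B (e.symm q),
    fun q => hB _, fun U hU x hx => ?_, fun _ _ _ => @htrans _ _ _, fun p q => hanti _ _,
    fun x p hp q hq => ?_, fun D hne hD hdirD => ?_⟩
  · obtain ⟨q, hq⟩ := hbase U hU x hx
    exact ⟨e q, by simpa using hq⟩
  · obtain ⟨t, ht, hpt, hqt⟩ := hdir x _ hp _ hq
    exact ⟨e t, by simpa using ht, by simpa using hpt, by simpa using hqt⟩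
  · have hdir' : DirectedOn r (e.symm '' D) := by
      rintro _ ⟨p, hp, rfl⟩ _ ⟨q, hq, rfl⟩
      obtain ⟨t, ht, hpt, hqt⟩ := hdirD p hp q hq
      exact ⟨e.symm t, mem_image_of_mem _ ht, hpt, hqt⟩
    simpa only [biInter_image] using
      hinter _ (hne.image _) (hD.image _) hdir'

end Transfer

theorem small_of_mk_le_continuum {I : Type v} (h : #I ≤ 𝔠) : Small.{u} I := by
  have : lift.{0} #I ≤ lift.{v} #(ℕ → Bool) := by simpa using h
  obtain ⟨e⟩ := lift_mk_le'.mp this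
  exact small_of_injective e.injective

namespace Sigma01

variable {I : Type v}

theorem exists_countable_basicSet_subset {U : Set (Sigma01 I)} (hU : IsOpen U) {x : Sigma01 I}
    (hx : x ∈ U) : ∃ A : Set I, A.Countable ∧ basicSet I A x.1 ⊆ U := by
  induction hU with
  | basic V hV =>
    obtain ⟨A, f, hA, rfl⟩ := hV
    exact ⟨A, hA, fun y hy a ha => (hy a ha).trans (hx a ha)⟩
  | univ => exact ⟨∅, countable_empty, subset_univ _⟩
  | inter V W _ _ ihV ihW =>
    obtain ⟨A, hA, hAV⟩ := ihV hx.1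
    obtain ⟨A', hA', hA'W⟩ := ihW hx.2
    exact ⟨A ∪ A', hA.union hA', fun y hy =>
      ⟨hAV fun a ha => hy a (Or.inl ha), hA'W fun a ha => hy a (Or.inr ha)⟩⟩
  | sUnion S _ ih =>
    obtain ⟨V, hVS, hxV⟩ := hx
    obtain ⟨A, hA, hAV⟩ := ih V hVS hxV
    exact ⟨A, hA, hAV.trans (subset_sUnion_of_mem hVS)⟩

theorem exists_mem_basicSet_of_pairwise_eqOn {D : Set (Set I × (I → Bool))} (hD : D.Countable)
    (hdom : ∀ p ∈ D, p.1.Countable) (hcompat : ∀ p ∈ D, ∀ q ∈ D, EqOn p.2 q.2 (p.1 ∩ q.1)) :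
    ∃ x : Sigma01 I, ∀ p ∈ D, x ∈ basicSet I p.1 p.2 := by
  classical
  let f : I → Bool := fun a => if h : ∃ p ∈ D, a ∈ p.1 then h.choose.2 a else false
  have hsupp : {a | f a = true} ⊆ ⋃ p ∈ D, p.1 := fun a ha => by
    by_cases h : ∃ p ∈ D, a ∈ p.1
    · simpa only [mem_iUnion₂, exists_prop] using h
    · simp only [mem_setOf_eq, f, dif_neg h] at ha
      cases ha
  refine ⟨⟨f, (hD.biUnion hdom).mono hsupp⟩, fun p hp a ha => ?_⟩
  have h : ∃ p ∈ D, a ∈ p.1 := ⟨p, hp, ha⟩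
  simp only [f, dif_pos h]
  exact hcompat _ h.choose_spec.1 p hp ⟨h.choose_spec.2, ha⟩

end Sigma01

/-- A countable partial function `I ⇀ Bool`, with domain `dom`; `val` matters only on `dom`. -/
structure CountablePattern (I : Type v) where
  dom : Set I
  val : I → Bool
  countable_dom : dom.Countable

namespace CountablePattern

variable {I : Type v}

def Refines (p q : CountablePattern I) : Prop :=
  p.dom ⊆ q.dom ∧ EqOn p.val q.val p.dom

theorem refines_refl (p : CountablePattern I) : p.Refines p :=
  ⟨subset_rfl, eqOn_refl _ _⟩

instance : Std.Refl (Refines (I := I)) := ⟨refines_refl⟩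

theorem refines_trans : Transitive (Refines (I := I)) := fun _ _ _ hpq hqt =>
  ⟨hpq.1.trans hqt.1, fun _ ha => (hpq.2 ha).trans (hqt.2 (hpq.1 ha))⟩

theorem basicSet_anti {p q : CountablePattern I} (h : p.Refines q) :
    basicSet I q.dom q.val ⊆ basicSet I p.dom p.val :=
  fun _ hy a ha => (hy a (h.1 ha)).trans (h.2 ha).symm

theorem refines_of_mem_basicSet {p : CountablePattern I} {x : Sigma01 I}
    (hx : x ∈ basicSet I p.dom p.val) {A : Set I} (hA : A.Countable) (hpA : p.dom ⊆ A) :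
    p.Refines ⟨A, x.1, hA⟩ :=
  ⟨hpA, fun a ha => (hx a ha).symm⟩

theorem eqOn_of_directedOn {D : Set (CountablePattern I)} (hD : DirectedOn Refines D) :
    ∀ p ∈ D, ∀ q ∈ D, EqOn p.val q.val (p.dom ∩ q.dom) := by
  intro p hp q hq a ha
  obtain ⟨t, -, hpt, hqt⟩ := hD p hp q hq
  exact (hpt.2 ha.1).trans (hqt.2 ha.2).symm

theorem exists_mem_iInter_basicSet {D : Set (CountablePattern I)} (hD : D.Countable)
    (hdir : DirectedOn Refines D) : (⋂ p ∈ D, basicSet I p.dom p.val).Nonempty := by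
  obtain ⟨x, hx⟩ :=
    Sigma01.exists_mem_basicSet_of_pairwise_eqOn (hD.image fun p => (p.dom, p.val))
      (by rintro _ ⟨p, -, rfl⟩; exact p.countable_dom)
      (by rintro _ ⟨p, hp, rfl⟩ _ ⟨q, hq, rfl⟩; exact eqOn_of_directedOn hdir p hp q hq)
  exact ⟨x, mem_iInter₂.mpr fun p hp => hx _ (mem_image_of_mem _ hp)⟩

instance [Small.{u} I] : Small.{u} (CountablePattern I) :=
  small_of_injective (f := fun p : CountablePattern I => (p.dom, p.val)) fun p q h => by
    cases p; cases q; simp_all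

end CountablePattern

theorem Sigma01.fyCountablyDomainRep {I : Type v} [Small.{u} I] :
    FYCountablyDomainRep.{u} (Sigma01 I) := by
  refine fyCountablyDomainRep_of_small CountablePattern.Refines
    (fun p => basicSet I p.dom p.val) (fun p => ⟨?_, ?_⟩) (fun U hU x hx => ?_)
    CountablePattern.refines_trans (fun _ _ => CountablePattern.basicSet_anti)
    (fun x p hp q hq => ?_) fun D _ hD hdir => CountablePattern.exists_mem_iInter_basicSet hD hdir
  · exact GenerateOpen.basic _ ⟨p.dom, p.val, p.countable_dom, rfl⟩
  · simpa using CountablePattern.exists_mem_iInter_basicSet (countable_singleton p)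
      (directedOn_singleton p)
  · obtain ⟨A, hA, hAU⟩ := Sigma01.exists_countable_basicSet_subset hU hx
    exact ⟨⟨A, x.1, hA⟩, fun _ _ => rfl, hAU⟩
  · let t : CountablePattern I := ⟨p.dom ∪ q.dom, x.1, p.countable_dom.union q.countable_dom⟩
    exact ⟨t, fun _ _ => rfl, CountablePattern.refines_of_mem_basicSet hp _ subset_union_left,
      CountablePattern.refines_of_mem_basicSet hq _ subset_union_right⟩

/-- σ({0,1}^{ω₁}) with the ω₁-box topology is F-Y countably domain
representable. -/
theorem stmt11 {I : Type v} (hI : Cardinal.mk I = Cardinal.aleph 1) :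
    FYCountablyDomainRep.{u} (Sigma01 I) :=
  have : Small.{u} I := small_of_mk_le_continuum (hI ▸ aleph_one_le_continuum)
  Sigma01.fyCountablyDomainRep
end

section
/- If (Q, ≪, B) F-Y countably π-represents a topological space X and additionally |⋂{B(q) : q ∈ D}| = 1 for every countable upward ≪-directed set D ⊆ Q, then (Q, ≪, B) F-Y π-represents X, i.e., ⋂{B(q) : q ∈ D} ≠ ∅ for every upward directed D ⊆ Q of arbitrary cardinality. -/
open Set TopologicalSpace

universe u v

/-- Closing `S` under a choice of upper bounds within `D`, countably many times, keeps it
countable and makes it directed. -/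
theorem DirectedOn.exists_countable_directedOn_superset {Q : Type u} {r : Q → Q → Prop}
    {D S : Set Q} (hD : DirectedOn r D) (hSD : S ⊆ D) (hS : S.Countable) :
    ∃ E : Set Q, S ⊆ E ∧ E ⊆ D ∧ E.Countable ∧ DirectedOn r E := by
  rcases S.eq_empty_or_nonempty with rfl | ⟨s, -⟩
  · exact ⟨∅, subset_rfl, empty_subset D, countable_empty, fun _ h => h.elim⟩
  have : Nonempty Q := ⟨s⟩
  choose! ub hubD hub_left hub_right using hD
  let F : ℕ → Set Q := fun n => Nat.rec S (fun _ T => T ∪ image2 ub T T) n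
  have hF_mono : Monotone F := monotone_nat_of_le_succ fun _ => subset_union_left
  have hFD : ∀ n, F n ⊆ D := by
    intro n
    induction n with
    | zero => exact hSD
    | succ n ih =>
      rintro _ (hx | ⟨a, ha, b, hb, rfl⟩)
      exacts [ih hx, hubD a (ih ha) b (ih hb)]
  have hF_countable : ∀ n, (F n).Countable := by
    intro n
    induction n with
    | zero => exact hS
    | succ n ih => exact ih.union (ih.image2 ih _)
  refine ⟨⋃ n, F n, subset_iUnion F 0, iUnion_subset hFD, countable_iUnion hF_countable, ?_⟩
  rintro a ⟨_, ⟨m, rfl⟩, ha⟩ b ⟨_, ⟨k, rfl⟩, hb⟩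
  have ha' := hF_mono (le_max_left m k) ha
  have hb' := hF_mono (le_max_right m k) hb
  exact ⟨ub a b, mem_iUnion.2 ⟨max m k + 1, Or.inr (mem_image2_of_mem ha' hb')⟩,
    hub_left a (hFD _ ha') b (hFD _ hb'), hub_right a (hFD _ ha') b (hFD _ hb')⟩

/- Every `q ∈ D` lies in a countable directed `E ⊆ D` containing a fixed countable directed
`E₀ ⊆ D`; the singleton `⋂ E` sits inside the singleton `⋂ E₀`, so the point of `⋂ E₀`
lies in `B q`. -/
theorem stmt16_general {X : Type v} [TopologicalSpace X] {Q : Type u}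
    (r : Q → Q → Prop) (B : Q → Set X)
    (hsingle : ∀ D : Set Q, D.Nonempty → D.Countable → DirectedOn r D →
      ∃ x : X, (⋂ q ∈ D, B q) = {x}) :
    ∀ D : Set Q, D.Nonempty → DirectedOn r D → (⋂ q ∈ D, B q).Nonempty := by
  rintro D ⟨d₀, hd₀⟩ hD
  obtain ⟨E₀, hd₀E₀, hE₀D, hE₀c, hE₀dir⟩ :=
    hD.exists_countable_directedOn_superset (singleton_subset_iff.2 hd₀) (countable_singleton d₀)
  obtain ⟨x, hx⟩ := hsingle E₀ ⟨d₀, hd₀E₀ rfl⟩ hE₀c hE₀dir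
  refine ⟨x, mem_iInter₂.2 fun q hq => ?_⟩
  obtain ⟨E, hE₀qE, -, hEc, hEdir⟩ :=
    hD.exists_countable_directedOn_superset (union_subset hE₀D (singleton_subset_iff.2 hq))
      (hE₀c.union (countable_singleton q))
  have hqE : q ∈ E := hE₀qE (Or.inr rfl)
  obtain ⟨y, hy⟩ := hsingle E ⟨q, hqE⟩ hEc hEdir
  have hyx : y = x := by
    have : (⋂ p ∈ E, B p) ⊆ ⋂ p ∈ E₀, B p :=
      biInter_subset_biInter_left (subset_union_left.trans hE₀qE)
    rw [hy, hx, singleton_subset_iff] at this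
    exact this
  have hy_mem : y ∈ ⋂ p ∈ E, B p := hy ▸ mem_singleton y
  exact hyx ▸ mem_iInter₂.1 hy_mem q hqE

/-- if `(Q, ≪, B)` F-Y countably π-represents `X` and the intersection
over every countable upward directed set is a singleton, then the triple F-Y
π-represents `X`: the intersection over every upward directed set is nonempty. -/
theorem stmt16 {X : Type v} [TopologicalSpace X] {Q : Type u}
    (r : Q → Q → Prop) (B : Q → Set X)
    (hB : ∀ q, IsOpen (B q) ∧ (B q).Nonempty)
    (hpi : ∀ U : Set X, IsOpen U → U.Nonempty → ∃ q, B q ⊆ U)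
    (htrans : Transitive r)
    (hmono : ∀ p q, r p q → B q ⊆ B p)
    (hdir : ∀ p q, (B p ∩ B q).Nonempty → ∃ t, r p t ∧ r q t)
    (hsingle : ∀ D : Set Q, D.Nonempty → D.Countable → DirectedOn r D →
      ∃ x : X, (⋂ q ∈ D, B q) = {x}) :
    ∀ D : Set Q, D.Nonempty → DirectedOn r D → (⋂ q ∈ D, B q).Nonempty :=
  stmt16_general r B hsingle
end

section
/- If X is F-Y countably π-domain representable, then X is a Baire space. -/
open Set TopologicalSpace

universe u v

theorem exists_seq_forall_succ {Q : Type*} {P : ℕ → Q → Q → Prop} (hP : ∀ n a, ∃ b, P n a b)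
    (a₀ : Q) : ∃ q : ℕ → Q, q 0 = a₀ ∧ ∀ n, P n (q n) (q (n + 1)) := by
  choose g hg using hP
  exact ⟨fun n => Nat.rec a₀ g n, rfl, fun n => hg n _⟩

theorem exists_rel_subset_of_dense {X Q : Type*} [TopologicalSpace X] {r : Q → Q → Prop}
    {B : Q → Set X} (hB : ∀ q, IsOpen (B q) ∧ (B q).Nonempty)
    (hπ : ∀ U : Set X, IsOpen U → U.Nonempty → ∃ q, B q ⊆ U)
    (hmono : ∀ p q, r p q → B q ⊆ B p)
    (hub : ∀ p q, (B p ∩ B q).Nonempty → ∃ t, r p t ∧ r q t) {V : Set X} (hVo : IsOpen V)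
    (hVd : Dense V) (q : Q) : ∃ q', r q q' ∧ B q' ⊆ V := by
  obtain ⟨p, hp⟩ := hπ (B q ∩ V) ((hB q).1.inter hVo)
    (hVd.inter_open_nonempty _ (hB q).1 (hB q).2)
  obtain ⟨t, hpt, hqt⟩ := hub p q ((hB p).2.mono fun x hx => ⟨hx, (hp hx).1⟩)
  exact ⟨t, hqt, fun x hx => (hp (hmono p t hpt hx)).2⟩

/-- every F-Y countably π-domain representable space is a Baire space. -/
theorem stmt19 {X : Type v} [TopologicalSpace X]
    (h : FYCountablyPiDomainRep.{u} X) : BaireSpace X := by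
  obtain ⟨Q, r, B, hB, hπ, htrans, hmono, hub, hcap⟩ := h
  refine ⟨fun V hVo hVd => dense_iff_inter_open.2 fun U hU hUne => ?_⟩
  obtain ⟨q₀, hq₀U⟩ := hπ U hU hUne
  obtain ⟨q, rfl, hq⟩ := exists_seq_forall_succ
    (fun n p => exists_rel_subset_of_dense hB hπ hmono hub (hVo n) (hVd n) p) q₀
  have : IsTrans Q r := ⟨htrans⟩
  obtain ⟨x, hx⟩ := hcap (range q) (range_nonempty q) (countable_range q)
    (directedOn_range_of_rel_succ fun n => (hq n).1)
  rw [mem_iInter₂] at hx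
  exact ⟨x, hq₀U (hx _ (mem_range_self 0)),
    mem_iInter.2 fun n => (hq n).2 (hx _ (mem_range_self _))⟩
end
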